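/- arXiv:quant-ph/0112011 — 2 statements merged into one kernel-verified Lean document; each statement's English description precedes it below -/
import Mathlib

section
/- For a smooth function f = a^k(q) p_k + b(q) on ℝ^n × ℝ^n affine in p, define the Schrödinger operator f̂ = −i Σ_k a^k ∂_{q^k} − (i/2) Σ_k ∂_{q^k} a^k + b acting on smooth compactly supported complex functions on ℝ^n. Then for any two such affine functions f, f', the Dirac condition holds: [f̂, f̂'] = −i (\widehat{\{f,f'\}}), where {f,f'} = Σ_k (∂_{p_k} f ∂_{q^k} f' − ∂_{q^k} f ∂_{p_k} f') is the canonical Poisson bracket. -/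
open scoped BigOperators

/-- The Schrödinger operator `f̂ = −i ∑_k a^k ∂_{q^k} − (i/2) ∑_k ∂_{q^k} a^k + b`
associated with the function `f = a^k(q) p_k + b(q)` affine in momenta, acting on
complex functions on `ℝ^n`. -/
noncomputable def Qop (n : ℕ) (a : Fin n → (Fin n → ℝ) → ℝ) (b : (Fin n → ℝ) → ℝ)
    (ρ : (Fin n → ℝ) → ℂ) : (Fin n → ℝ) → ℂ := fun q =>
  (-Complex.I) * ∑ k, (a k q : ℂ) * fderiv ℝ ρ q (Pi.single k 1)
    - (Complex.I / 2) * (∑ k, (fderiv ℝ (a k) q (Pi.single k 1) : ℂ)) * ρ q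
    + (b q : ℂ) * ρ q

noncomputable def Dk (n : ℕ) (k : Fin n) (f : (Fin n → ℝ) → ℂ) : (Fin n → ℝ) → ℂ :=
  fun q => fderiv ℝ f q (Pi.single k 1)

section DkLemmas

variable {n : ℕ} {f g : (Fin n → ℝ) → ℂ} {q : Fin n → ℝ}

lemma Dk_contDiff (hf : ContDiff ℝ (⊤ : ℕ∞) f) (k : Fin n) : ContDiff ℝ (⊤ : ℕ∞) (Dk n k f) := by
  have h1 : ContDiff ℝ (⊤ : ℕ∞) (fderiv ℝ f) := hf.fderiv_right (by simp)
  exact (ContinuousLinearMap.apply ℝ ℂ (Pi.single k 1)).contDiff.comp h1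

lemma Dk_add (k : Fin n) (hf : DifferentiableAt ℝ f q) (hg : DifferentiableAt ℝ g q) :
    Dk n k (fun q => f q + g q) q = Dk n k f q + Dk n k g q := by
  simp [Dk, fderiv_fun_add hf hg]

lemma Dk_sub (k : Fin n) (hf : DifferentiableAt ℝ f q) (hg : DifferentiableAt ℝ g q) :
    Dk n k (fun q => f q - g q) q = Dk n k f q - Dk n k g q := by
  simp [Dk, fderiv_fun_sub hf hg]

lemma Dk_mul (k : Fin n) (hf : DifferentiableAt ℝ f q) (hg : DifferentiableAt ℝ g q) :
    Dk n k (fun q => f q * g q) q = Dk n k f q * g q + f q * Dk n k g q := by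
  simp only [Dk, fderiv_fun_mul hf hg]
  simp [smul_eq_mul]
  ring

lemma Dk_const_mul (k : Fin n) (c : ℂ) (hf : DifferentiableAt ℝ f q) :
    Dk n k (fun q => c * f q) q = c * Dk n k f q := by
  simp [Dk, fderiv_const_mul hf c]

lemma Dk_sum (k : Fin n) {ι : Type*} (s : Finset ι) (F : ι → (Fin n → ℝ) → ℂ)
    (hF : ∀ i ∈ s, DifferentiableAt ℝ (F i) q) :
    Dk n k (fun q => ∑ i ∈ s, F i q) q = ∑ i ∈ s, Dk n k (F i) q := by
  simp [Dk, fderiv_fun_sum hF]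

lemma Dk_Dk (hf : ContDiff ℝ (⊤ : ℕ∞) f) (k r : Fin n) :
    Dk n k (Dk n r f) q = fderiv ℝ (fderiv ℝ f) q (Pi.single k 1) (Pi.single r 1) := by
  have hd : DifferentiableAt ℝ (fderiv ℝ f) q :=
    ((hf.fderiv_right (m := (⊤ : ℕ∞)) (by simp)).differentiable (by simp)) q
  have h2 : HasFDerivAt
      ((ContinuousLinearMap.apply ℝ ℂ (Pi.single r 1)) ∘ (fderiv ℝ f))
      ((ContinuousLinearMap.apply ℝ ℂ (Pi.single r 1)).comp (fderiv ℝ (fderiv ℝ f) q)) q :=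
    ((ContinuousLinearMap.apply ℝ ℂ (Pi.single r 1)).hasFDerivAt).comp q hd.hasFDerivAt
  have : Dk n r f = (ContinuousLinearMap.apply ℝ ℂ (Pi.single r 1)) ∘ (fderiv ℝ f) := rfl
  rw [Dk, this, h2.fderiv]
  rfl

lemma Dk_comm (hf : ContDiff ℝ (⊤ : ℕ∞) f) (k r : Fin n) :
    Dk n k (Dk n r f) q = Dk n r (Dk n k f) q := by
  rw [Dk_Dk hf, Dk_Dk hf]
  exact (hf.contDiffAt.isSymmSndFDerivAt (by rw [minSmoothness_of_isRCLikeNormedField]; exact WithTop.coe_le_coe.mpr (le_top : (2 : ℕ∞) ≤ ⊤))) _ _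

lemma Dk_ofReal {a : (Fin n → ℝ) → ℝ} (ha : DifferentiableAt ℝ a q) (k : Fin n) :
    Dk n k (fun q => (a q : ℂ)) q = (fderiv ℝ a q (Pi.single k 1) : ℂ) := by
  have h2 : HasFDerivAt (Complex.ofRealCLM ∘ a)
      (Complex.ofRealCLM.comp (fderiv ℝ a q)) q :=
    Complex.ofRealCLM.hasFDerivAt.comp q ha.hasFDerivAt
  have : (fun q => ((a q : ℝ) : ℂ)) = Complex.ofRealCLM ∘ a := rfl
  rw [Dk, this, h2.fderiv]
  rfl

end DkLemmas

/-- The Schrödinger operator with complex coefficients. -/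
noncomputable def QC (n : ℕ) (A : Fin n → (Fin n → ℝ) → ℂ) (B : (Fin n → ℝ) → ℂ)
    (ρ : (Fin n → ℝ) → ℂ) : (Fin n → ℝ) → ℂ := fun q =>
  (-Complex.I) * ∑ k, A k q * Dk n k ρ q
    - (Complex.I / 2) * (∑ k, Dk n k (A k) q) * ρ q
    + B q * ρ q

section QCLemmas

variable {n : ℕ} {A : Fin n → (Fin n → ℝ) → ℂ} {B ρ : (Fin n → ℝ) → ℂ}

lemma Dk_QC (hA : ∀ k, ContDiff ℝ (⊤ : ℕ∞) (A k)) (hB : ContDiff ℝ (⊤ : ℕ∞) B) (hρ : ContDiff ℝ (⊤ : ℕ∞) ρ)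
    (k : Fin n) (q : Fin n → ℝ) :
    Dk n k (QC n A B ρ) q =
      (-Complex.I) * ∑ r, (Dk n k (A r) q * Dk n r ρ q + A r q * Dk n k (Dk n r ρ) q)
      - (Complex.I / 2) * ((∑ r, Dk n k (Dk n r (A r)) q) * ρ q
          + (∑ r, Dk n r (A r) q) * Dk n k ρ q)
      + (Dk n k B q * ρ q + B q * Dk n k ρ q) := by
  have hS1 : ContDiff ℝ (⊤ : ℕ∞) (fun q => ∑ r, A r q * Dk n r ρ q) :=
    ContDiff.sum fun r _ => (hA r).mul (Dk_contDiff hρ r)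
  have h1 : ContDiff ℝ (⊤ : ℕ∞) (fun q => (-Complex.I) * ∑ r, A r q * Dk n r ρ q) :=
    contDiff_const.mul hS1
  have hS2 : ContDiff ℝ (⊤ : ℕ∞) (fun q => ∑ r, Dk n r (A r) q) :=
    ContDiff.sum fun r _ => Dk_contDiff (hA r) r
  have h2a : ContDiff ℝ (⊤ : ℕ∞) (fun q => (Complex.I / 2) * ∑ r, Dk n r (A r) q) :=
    contDiff_const.mul hS2
  have h2 : ContDiff ℝ (⊤ : ℕ∞) (fun q => (Complex.I / 2) * (∑ r, Dk n r (A r) q) * ρ q) :=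
    h2a.mul hρ
  have h3 : ContDiff ℝ (⊤ : ℕ∞) (fun q => B q * ρ q) := hB.mul hρ
  have e0 : QC n A B ρ = fun q =>
      ((-Complex.I) * ∑ r, A r q * Dk n r ρ q
        - (Complex.I / 2) * (∑ r, Dk n r (A r) q) * ρ q) + B q * ρ q := rfl
  rw [e0, Dk_add k ((h1.sub h2).differentiable (by simp) q) (h3.differentiable (by simp) q),
    Dk_sub k (h1.differentiable (by simp) q) (h2.differentiable (by simp) q),
    Dk_const_mul k (-Complex.I) (hS1.differentiable (by simp) q),
    Dk_sum k Finset.univ (fun r => fun q => A r q * Dk n r ρ q)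
      (fun r _ => ((hA r).mul (Dk_contDiff hρ r)).differentiable (by simp) q),
    Finset.sum_congr rfl (fun r _ => Dk_mul k ((hA r).differentiable (by simp) q)
      ((Dk_contDiff hρ r).differentiable (by simp) q)),
    Dk_mul k (h2a.differentiable (by simp) q) (hρ.differentiable (by simp) q),
    Dk_const_mul k (Complex.I / 2) (hS2.differentiable (by simp) q),
    Dk_sum k Finset.univ (fun r => Dk n r (A r))
      (fun r _ => (Dk_contDiff (hA r) r).differentiable (by simp) q),
    Dk_mul k (hB.differentiable (by simp) q) (hρ.differentiable (by simp) q)]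
  ring

end QCLemmas


lemma alg1 (n : ℕ) (x x' du dy' : Fin n → ℂ) (dx' ddu : Fin n → Fin n → ℂ)
    (ddx' : Fin n → Fin n → Fin n → ℂ) (y' u : ℂ) :
    ∑ k, x k * ((-Complex.I) * ∑ r, (dx' r k * du r + x' r * ddu k r)
        - (Complex.I/2) * ((∑ r, ddx' r k r) * u + (∑ r, dx' r r) * du k)
        + (dy' k * u + y' * du k))
    = (-Complex.I) * (∑ k, ∑ r, x k * (dx' r k * du r))
      + (-Complex.I) * (∑ k, ∑ r, x k * (x' r * ddu k r))
      - (Complex.I/2) * ((∑ k, ∑ r, x k * ddx' r k r) * u)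
      - (Complex.I/2) * ((∑ r, dx' r r) * ∑ k, x k * du k)
      + ((∑ k, x k * dy' k) * u + y' * ∑ k, x k * du k) := by
  have h : ∀ k : Fin n, x k * ((-Complex.I) * ∑ r, (dx' r k * du r + x' r * ddu k r)
        - (Complex.I/2) * ((∑ r, ddx' r k r) * u + (∑ r, dx' r r) * du k)
        + (dy' k * u + y' * du k))
      = (-Complex.I) * (∑ r, x k * (dx' r k * du r))
        + (-Complex.I) * (∑ r, x k * (x' r * ddu k r))
        - (Complex.I/2) * ((∑ r, x k * ddx' r k r) * u)
        - (Complex.I/2) * ((∑ r, dx' r r) * (x k * du k))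
        + ((x k * dy' k) * u + y' * (x k * du k)) := by
    intro k
    simp only [Finset.sum_add_distrib]
    simp only [← Finset.mul_sum]
    ring
  rw [Finset.sum_congr rfl fun k _ => h k]
  simp only [Finset.sum_add_distrib, Finset.sum_sub_distrib]
  simp only [← Finset.mul_sum, ← Finset.sum_mul]

lemma alg (n : ℕ) (x x' du dy dy' : Fin n → ℂ) (dx dx' ddu : Fin n → Fin n → ℂ)
    (ddx ddx' : Fin n → Fin n → Fin n → ℂ) (y y' u : ℂ)
    (hddu : ∀ k r, ddu k r = ddu r k)
    (hddx : ∀ m k r, ddx m k r = ddx m r k)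
    (hddx' : ∀ m k r, ddx' m k r = ddx' m r k) :
    ((-Complex.I) * ∑ k, x k * ((-Complex.I) * ∑ r, (dx' r k * du r + x' r * ddu k r)
        - (Complex.I/2) * ((∑ r, ddx' r k r) * u + (∑ r, dx' r r) * du k)
        + (dy' k * u + y' * du k))
      - (Complex.I/2) * (∑ k, dx k k) * ((-Complex.I) * ∑ k, x' k * du k
          - (Complex.I/2) * (∑ k, dx' k k) * u + y' * u)
      + y * ((-Complex.I) * ∑ k, x' k * du k
          - (Complex.I/2) * (∑ k, dx' k k) * u + y' * u))
    - ((-Complex.I) * ∑ k, x' k * ((-Complex.I) * ∑ r, (dx r k * du r + x r * ddu k r)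
        - (Complex.I/2) * ((∑ r, ddx r k r) * u + (∑ r, dx r r) * du k)
        + (dy k * u + y * du k))
      - (Complex.I/2) * (∑ k, dx' k k) * ((-Complex.I) * ∑ k, x k * du k
          - (Complex.I/2) * (∑ k, dx k k) * u + y * u)
      + y' * ((-Complex.I) * ∑ k, x k * du k
          - (Complex.I/2) * (∑ k, dx k k) * u + y * u))
    = (-Complex.I) * ((-Complex.I) * ∑ k, (∑ r, (x r * dx' k r - x' r * dx k r)) * du k
      - (Complex.I/2) * (∑ k, ∑ r, (dx r k * dx' k r + x r * ddx' k k r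
          - (dx' r k * dx k r + x' r * ddx k k r))) * u
      + (∑ k, (x k * dy' k - x' k * dy k)) * u) := by
  rw [alg1 n x x' du dy' dx' ddu ddx' y' u, alg1 n x' x du dy dx ddu ddx y u]
  have hM2 : (∑ k, ∑ r, x k * (x' r * ddu k r)) = ∑ k, ∑ r, x' k * (x r * ddu k r) := by
    rw [Finset.sum_comm]
    exact Finset.sum_congr rfl fun k _ => Finset.sum_congr rfl fun r _ => by
      rw [hddu r k]; ring
  have hR1 : (∑ k, (∑ r, (x r * dx' k r - x' r * dx k r)) * du k)
      = (∑ k, ∑ r, x k * (dx' r k * du r)) - (∑ k, ∑ r, x' k * (dx r k * du r)) := by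
    have h : ∀ k : Fin n, (∑ r, (x r * dx' k r - x' r * dx k r)) * du k
        = ∑ r, (x r * (dx' k r * du k) - x' r * (dx k r * du k)) := fun k => by
      rw [Finset.sum_mul]
      exact Finset.sum_congr rfl fun r _ => by ring
    rw [Finset.sum_congr rfl fun k _ => h k, Finset.sum_comm]
    simp only [Finset.sum_sub_distrib]
  have hR2 : (∑ k, ∑ r, (dx r k * dx' k r + x r * ddx' k k r
        - (dx' r k * dx k r + x' r * ddx k k r)))
      = (∑ k, ∑ r, x k * ddx' r k r) - (∑ k, ∑ r, x' k * ddx r k r) := by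
    simp only [Finset.sum_sub_distrib, Finset.sum_add_distrib]
    have h0 : (∑ k, ∑ r, dx r k * dx' k r) = ∑ k, ∑ r, dx' r k * dx k r := by
      rw [Finset.sum_comm]
      exact Finset.sum_congr rfl fun k _ => Finset.sum_congr rfl fun r _ => mul_comm _ _
    have h1 : (∑ k, ∑ r, x r * ddx' k k r) = ∑ k, ∑ r, x k * ddx' r k r := by
      rw [Finset.sum_comm]
      exact Finset.sum_congr rfl fun k _ => Finset.sum_congr rfl fun r _ => by
        rw [hddx' r r k]
    have h2 : (∑ k, ∑ r, x' r * ddx k k r) = ∑ k, ∑ r, x' k * ddx r k r := by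
      rw [Finset.sum_comm]
      exact Finset.sum_congr rfl fun k _ => Finset.sum_congr rfl fun r _ => by
        rw [hddx r r k]
    rw [h0, h1, h2]
    ring
  have hR3 : (∑ k, (x k * dy' k - x' k * dy k))
      = (∑ k, x k * dy' k) - (∑ k, x' k * dy k) := Finset.sum_sub_distrib _ _
  rw [hM2, hR1, hR2, hR3]
  ring

section Key

variable {n : ℕ} {A A' : Fin n → (Fin n → ℝ) → ℂ} {B B' ρ : (Fin n → ℝ) → ℂ}

lemma Dk_bracket (hA : ∀ k, ContDiff ℝ (⊤ : ℕ∞) (A k)) (hA' : ∀ k, ContDiff ℝ (⊤ : ℕ∞) (A' k))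
    (k : Fin n) (q : Fin n → ℝ) :
    Dk n k (fun q => ∑ r, (A r q * Dk n r (A' k) q - A' r q * Dk n r (A k) q)) q
      = ∑ r, (Dk n k (A r) q * Dk n r (A' k) q + A r q * Dk n k (Dk n r (A' k)) q
          - (Dk n k (A' r) q * Dk n r (A k) q + A' r q * Dk n k (Dk n r (A k)) q)) := by
  rw [Dk_sum k Finset.univ
      (fun r => fun q => A r q * Dk n r (A' k) q - A' r q * Dk n r (A k) q)
      (fun r _ => (((hA r).mul (Dk_contDiff (hA' k) r)).sub
        ((hA' r).mul (Dk_contDiff (hA k) r))).differentiable (by simp) q)]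
  refine Finset.sum_congr rfl fun r _ => ?_
  rw [Dk_sub k (((hA r).mul (Dk_contDiff (hA' k) r)).differentiable (by simp) q)
      (((hA' r).mul (Dk_contDiff (hA k) r)).differentiable (by simp) q),
    Dk_mul k ((hA r).differentiable (by simp) q) ((Dk_contDiff (hA' k) r).differentiable (by simp) q),
    Dk_mul k ((hA' r).differentiable (by simp) q) ((Dk_contDiff (hA k) r).differentiable (by simp) q)]

theorem keyC (hA : ∀ k, ContDiff ℝ (⊤ : ℕ∞) (A k)) (hA' : ∀ k, ContDiff ℝ (⊤ : ℕ∞) (A' k))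
    (hB : ContDiff ℝ (⊤ : ℕ∞) B) (hB' : ContDiff ℝ (⊤ : ℕ∞) B') (hρ : ContDiff ℝ (⊤ : ℕ∞) ρ) :
    QC n A B (QC n A' B' ρ) - QC n A' B' (QC n A B ρ)
      = fun q => (-Complex.I) *
          QC n (fun k q => ∑ r, (A r q * Dk n r (A' k) q - A' r q * Dk n r (A k) q))
            (fun q => ∑ k, (A k q * Dk n k B' q - A' k q * Dk n k B q)) ρ q := by
  funext q
  simp only [Pi.sub_apply]
  have hsL : (∑ k, A k q * Dk n k (QC n A' B' ρ) q)
      = ∑ k, A k q * ((-Complex.I) * ∑ r, (Dk n k (A' r) q * Dk n r ρ q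
            + A' r q * Dk n k (Dk n r ρ) q)
          - (Complex.I / 2) * ((∑ r, Dk n k (Dk n r (A' r)) q) * ρ q
              + (∑ r, Dk n r (A' r) q) * Dk n k ρ q)
          + (Dk n k B' q * ρ q + B' q * Dk n k ρ q)) :=
    Finset.sum_congr rfl fun k _ => by rw [Dk_QC hA' hB' hρ k q]
  have hsL' : (∑ k, A' k q * Dk n k (QC n A B ρ) q)
      = ∑ k, A' k q * ((-Complex.I) * ∑ r, (Dk n k (A r) q * Dk n r ρ q
            + A r q * Dk n k (Dk n r ρ) q)
          - (Complex.I / 2) * ((∑ r, Dk n k (Dk n r (A r)) q) * ρ q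
              + (∑ r, Dk n r (A r) q) * Dk n k ρ q)
          + (Dk n k B q * ρ q + B q * Dk n k ρ q)) :=
    Finset.sum_congr rfl fun k _ => by rw [Dk_QC hA hB hρ k q]
  have hsDiv : (∑ k, Dk n k
        (fun q => ∑ r, (A r q * Dk n r (A' k) q - A' r q * Dk n r (A k) q)) q)
      = ∑ k, ∑ r, (Dk n k (A r) q * Dk n r (A' k) q + A r q * Dk n k (Dk n r (A' k)) q
          - (Dk n k (A' r) q * Dk n r (A k) q + A' r q * Dk n k (Dk n r (A k)) q)) :=
    Finset.sum_congr rfl fun k _ => Dk_bracket hA hA' k q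
  have eL : QC n A B (QC n A' B' ρ) q
      = (-Complex.I) * ∑ k, A k q * Dk n k (QC n A' B' ρ) q
        - (Complex.I / 2) * (∑ k, Dk n k (A k) q) * (QC n A' B' ρ q)
        + B q * (QC n A' B' ρ q) := rfl
  have eL' : QC n A' B' (QC n A B ρ) q
      = (-Complex.I) * ∑ k, A' k q * Dk n k (QC n A B ρ) q
        - (Complex.I / 2) * (∑ k, Dk n k (A' k) q) * (QC n A B ρ q)
        + B' q * (QC n A B ρ q) := rfl
  have eR : QC n (fun k q => ∑ r, (A r q * Dk n r (A' k) q - A' r q * Dk n r (A k) q))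
        (fun q => ∑ k, (A k q * Dk n k B' q - A' k q * Dk n k B q)) ρ q
      = (-Complex.I) * ∑ k, (∑ r, (A r q * Dk n r (A' k) q - A' r q * Dk n r (A k) q))
            * Dk n k ρ q
        - (Complex.I / 2) * (∑ k, Dk n k
            (fun q => ∑ r, (A r q * Dk n r (A' k) q - A' r q * Dk n r (A k) q)) q) * ρ q
        + (∑ k, (A k q * Dk n k B' q - A' k q * Dk n k B q)) * ρ q := rfl
  rw [eL, eL', eR, hsL, hsL', hsDiv]
  have eW' : QC n A' B' ρ q = (-Complex.I) * ∑ k, A' k q * Dk n k ρ q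
      - (Complex.I / 2) * (∑ k, Dk n k (A' k) q) * ρ q + B' q * ρ q := rfl
  have eW : QC n A B ρ q = (-Complex.I) * ∑ k, A k q * Dk n k ρ q
      - (Complex.I / 2) * (∑ k, Dk n k (A k) q) * ρ q + B q * ρ q := rfl
  rw [eW, eW']
  exact alg n (fun m => A m q) (fun m => A' m q) (fun r => Dk n r ρ q)
    (fun m => Dk n m B q) (fun m => Dk n m B' q)
    (fun m s => Dk n s (A m) q) (fun m s => Dk n s (A' m) q)
    (fun k r => Dk n k (Dk n r ρ) q)
    (fun m s t => Dk n s (Dk n t (A m)) q) (fun m s t => Dk n s (Dk n t (A' m)) q)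
    (B q) (B' q) (ρ q)
    (fun k r => Dk_comm hρ k r)
    (fun m k r => Dk_comm (hA m) k r)
    (fun m k r => Dk_comm (hA' m) k r)

end Key

lemma Qop_eq_QC {n : ℕ} (a : Fin n → (Fin n → ℝ) → ℝ) (b : (Fin n → ℝ) → ℝ)
    (ρ : (Fin n → ℝ) → ℂ) (ha : ∀ k, ContDiff ℝ (⊤ : ℕ∞) (a k)) :
    Qop n a b ρ = QC n (fun k q => (a k q : ℂ)) (fun q => (b q : ℂ)) ρ := by
  funext q
  have h : ∀ k : Fin n, Dk n k (fun q => ((a k q : ℝ) : ℂ)) q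
      = (fderiv ℝ (a k) q (Pi.single k 1) : ℂ) :=
    fun k => Dk_ofReal ((ha k).differentiable (by simp) q) k
  simp only [Qop, QC, h]
  simp only [Dk]


/-- The Dirac condition `[f̂, f̂'] = −i \widehat{\{f,f'\}}` for the Schrödinger operators
of functions affine in momenta, acting on smooth compactly supported functions: the
Poisson bracket `{f,f'}` has coefficients
`a''^k = ∑_r (a^r ∂_{q^r} a'^k − a'^r ∂_{q^r} a^k)` and
`b'' = ∑_k (a^k ∂_{q^k} b' − a'^k ∂_{q^k} b)`. -/
theorem stmt9 (n : ℕ)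
    (a a' : Fin n → (Fin n → ℝ) → ℝ) (b b' : (Fin n → ℝ) → ℝ)
    (ha : ∀ k, ContDiff ℝ (⊤ : ℕ∞) (a k)) (ha' : ∀ k, ContDiff ℝ (⊤ : ℕ∞) (a' k))
    (hb : ContDiff ℝ (⊤ : ℕ∞) b) (hb' : ContDiff ℝ (⊤ : ℕ∞) b')
    (ρ : (Fin n → ℝ) → ℂ) (hρ : ContDiff ℝ (⊤ : ℕ∞) ρ) (hρc : HasCompactSupport ρ) :
    Qop n a b (Qop n a' b' ρ) - Qop n a' b' (Qop n a b ρ)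
      = fun q => (-Complex.I) *
          Qop n
            (fun k q => ∑ r, (a r q * fderiv ℝ (a' k) q (Pi.single r 1)
              - a' r q * fderiv ℝ (a k) q (Pi.single r 1)))
            (fun q => ∑ k, (a k q * fderiv ℝ b' q (Pi.single k 1)
              - a' k q * fderiv ℝ b q (Pi.single k 1)))
            ρ q := by
  have hA : ∀ k, ContDiff ℝ (⊤ : ℕ∞) (fun q => ((a k q : ℝ) : ℂ)) :=
    fun k => Complex.ofRealCLM.contDiff.comp (ha k)
  have hA' : ∀ k, ContDiff ℝ (⊤ : ℕ∞) (fun q => ((a' k q : ℝ) : ℂ)) :=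
    fun k => Complex.ofRealCLM.contDiff.comp (ha' k)
  have hB : ContDiff ℝ (⊤ : ℕ∞) (fun q => ((b q : ℝ) : ℂ)) :=
    Complex.ofRealCLM.contDiff.comp hb
  have hB' : ContDiff ℝ (⊤ : ℕ∞) (fun q => ((b' q : ℝ) : ℂ)) :=
    Complex.ofRealCLM.contDiff.comp hb'
  have hder : ∀ (f : (Fin n → ℝ) → ℝ), ContDiff ℝ (⊤ : ℕ∞) f → ∀ r : Fin n,
      ContDiff ℝ (⊤ : ℕ∞) (fun q => fderiv ℝ f q (Pi.single r 1)) := fun f hf r => by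
    have h1 : ContDiff ℝ (⊤ : ℕ∞) (fderiv ℝ f) := hf.fderiv_right (by simp)
    exact (ContinuousLinearMap.apply ℝ ℝ (Pi.single r 1)).contDiff.comp h1
  have ha'' : ∀ k, ContDiff ℝ (⊤ : ℕ∞) (fun q => ∑ r, (a r q * fderiv ℝ (a' k) q (Pi.single r 1)
      - a' r q * fderiv ℝ (a k) q (Pi.single r 1))) := fun k =>
    ContDiff.sum fun r _ => ((ha r).mul (hder (a' k) (ha' k) r)).sub
      ((ha' r).mul (hder (a k) (ha k) r))
  have hb'' : ContDiff ℝ (⊤ : ℕ∞) (fun q => ∑ k, (a k q * fderiv ℝ b' q (Pi.single k 1)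
      - a' k q * fderiv ℝ b q (Pi.single k 1))) :=
    ContDiff.sum fun k _ => ((ha k).mul (hder b' hb' k)).sub ((ha' k).mul (hder b hb k))
  rw [Qop_eq_QC a' b' ρ ha', Qop_eq_QC a b ρ ha,
    Qop_eq_QC a b _ ha, Qop_eq_QC a' b' _ ha',
    keyC hA hA' hB hB' hρ]
  have hcoefA : (fun (k : Fin n) q => ∑ r, ((a r q : ℂ) * Dk n r (fun q => ((a' k q : ℝ) : ℂ)) q
        - (a' r q : ℂ) * Dk n r (fun q => ((a k q : ℝ) : ℂ)) q))
      = fun (k : Fin n) q => (((∑ r, (a r q * fderiv ℝ (a' k) q (Pi.single r 1)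
          - a' r q * fderiv ℝ (a k) q (Pi.single r 1))) : ℝ) : ℂ) := by
    funext k q
    push_cast
    exact Finset.sum_congr rfl fun r _ => by
      rw [Dk_ofReal ((ha' k).differentiable (by simp) q) r,
        Dk_ofReal ((ha k).differentiable (by simp) q) r]
  have hcoefB : (fun q => ∑ k, ((a k q : ℂ) * Dk n k (fun q => ((b' q : ℝ) : ℂ)) q
        - (a' k q : ℂ) * Dk n k (fun q => ((b q : ℝ) : ℂ)) q))
      = fun q => (((∑ k, (a k q * fderiv ℝ b' q (Pi.single k 1)
          - a' k q * fderiv ℝ b q (Pi.single k 1))) : ℝ) : ℂ) := by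
    funext q
    push_cast
    exact Finset.sum_congr rfl fun k _ => by
      rw [Dk_ofReal (hb'.differentiable (by simp) q) k,
        Dk_ofReal (hb.differentiable (by simp) q) k]
  rw [hcoefA, hcoefB, ← Qop_eq_QC _ _ ρ ha'']
end

section
/- Let f: ℝ^N → ℝ be such that f(q,p) = Σ_{|α|=n} a^α(q) p^α is a homogeneous polynomial of degree n ≥ 1 in p = (p_1,…,p_m) with smooth coefficients a^α on q ∈ ℝ^d, and let {φ_ξ}_{ξ=1}^r be a finite smooth partition of unity on ℝ^d subordinate to an open cover {U_ξ}. Setting l_ξ = φ_ξ (φ_1^n + ⋯ + φ_r^n)^{−1/n}, the functions l_ξ are smooth, Σ_ξ l_ξ^n = 1, and f decomposes as a finite sum f = Σ_ξ Σ_{(k_1,…,k_n)} [l_ξ a^{k_1…k_n}_ξ p_{k_1}] [l_ξ p_{k_2}] ⋯ [l_ξ p_{k_n}] of products of n smooth functions each affine in the momenta p. -/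
open scoped BigOperators

/-- The cutoff functions `l_ξ = φ_ξ (φ_1^n + ⋯ + φ_r^n)^{−1/n}` associated with a finite
partition of unity `{φ_ξ}`. -/
noncomputable def cutoff {d : ℕ} (r n : ℕ) (φ : Fin r → (Fin d → ℝ) → ℝ)
    (ξ : Fin r) (q : Fin d → ℝ) : ℝ :=
  φ ξ q * (∑ η, φ η q ^ n) ^ (-(1 : ℝ) / (n : ℝ))

private lemma mul_contDiff_of_tsupport {d : ℕ} {U : Set (Fin d → ℝ)} (hU : IsOpen U)
    {g h : (Fin d → ℝ) → ℝ} (hg : ContDiff ℝ (⊤ : ℕ∞) g) (hsupp : tsupport g ⊆ U)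
    (hh : ContDiffOn ℝ (⊤ : ℕ∞) h U) : ContDiff ℝ (⊤ : ℕ∞) (fun q => g q * h q) := by
  rw [contDiff_iff_contDiffAt]
  intro x
  by_cases hx : x ∈ U
  · exact (hg.contDiffAt).mul (hh.contDiffAt (hU.mem_nhds hx))
  · have h0 : g =ᶠ[nhds x] 0 :=
      notMem_tsupport_iff_eventuallyEq.mp (fun hmem => hx (hsupp hmem))
    have : (fun q => g q * h q) =ᶠ[nhds x] 0 := h0.mono fun y hy => by
      simp only [Pi.zero_apply] at hy ⊢; rw [hy, zero_mul]
    exact (contDiffAt_const (c := 0)).congr_of_eventuallyEq this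

/-- Lemma VII.1 of the paper: a homogeneous polynomial `f(q,p) = ∑ a^{k_1…k_n}(q)
p_{k_1}⋯p_{k_n}` of degree `n ≥ 1` in the momenta, with smooth local coefficients on a
finite cover carrying a subordinate partition of unity `{φ_ξ}`, decomposes — via the
smooth cutoffs `l_ξ` with `∑ l_ξ^n = 1` — into a finite sum of products of `n` smooth
functions, each affine in the momenta. -/
theorem stmt11 {d m : ℕ} (r n : ℕ) (hn : 1 ≤ n)
    (U : Fin r → Set (Fin d → ℝ)) (hU : ∀ ξ, IsOpen (U ξ))
    (φ : Fin r → (Fin d → ℝ) → ℝ)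
    (hφsm : ∀ ξ, ContDiff ℝ (⊤ : ℕ∞) (φ ξ)) (hφ0 : ∀ ξ q, 0 ≤ φ ξ q)
    (hφ1 : ∀ q, ∑ ξ, φ ξ q = 1) (hφsupp : ∀ ξ, tsupport (φ ξ) ⊆ U ξ)
    (a : Fin r → (Fin n → Fin m) → (Fin d → ℝ) → ℝ)
    (hasm : ∀ ξ κ, ContDiffOn ℝ (⊤ : ℕ∞) (a ξ κ) (U ξ))
    (f : ((Fin d → ℝ) × (Fin m → ℝ)) → ℝ)
    (hf : ∀ ξ, ∀ q ∈ U ξ, ∀ p : Fin m → ℝ,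
      f (q, p) = ∑ κ : Fin n → Fin m, a ξ κ q * ∏ t, p (κ t)) :
    (∀ ξ, ContDiff ℝ (⊤ : ℕ∞) (cutoff r n φ ξ)) ∧
    (∀ q, ∑ ξ, (cutoff r n φ ξ q) ^ n = 1) ∧
    (∀ ξ κ, ContDiff ℝ (⊤ : ℕ∞) (fun q => cutoff r n φ ξ q * a ξ κ q)) ∧
    (∀ (q : Fin d → ℝ) (p : Fin m → ℝ),
      f (q, p) = ∑ ξ, ∑ κ : Fin n → Fin m,
        (cutoff r n φ ξ q * a ξ κ q * p (κ ⟨0, by omega⟩))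
          * ∏ t ∈ Finset.univ.erase (⟨0, by omega⟩ : Fin n),
              (cutoff r n φ ξ q * p (κ t))) := by
  have hnR : (n : ℝ) ≠ 0 := Nat.cast_ne_zero.mpr (by omega)
  -- positivity of S q = ∑ φ η q ^ n
  have hS : ∀ q, 0 < ∑ η, φ η q ^ n := by
    intro q
    have hex : ∃ η, 0 < φ η q := by
      by_contra hc
      push_neg at hc
      have : ∑ ξ, φ ξ q = 0 := Finset.sum_eq_zero fun ξ _ =>
        le_antisymm (hc ξ) (hφ0 ξ q)
      rw [hφ1 q] at this; norm_num at this
    obtain ⟨η, hη⟩ := hex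
    exact Finset.sum_pos' (fun i _ => pow_nonneg (hφ0 i q) n)
      ⟨η, Finset.mem_univ η, pow_pos hη n⟩
  have hSsm : ContDiff ℝ (⊤ : ℕ∞) (fun q => ∑ η, φ η q ^ n) :=
    ContDiff.sum fun η _ => (hφsm η).pow n
  -- smoothness of the rpow factor
  have hRsm : ContDiff ℝ (⊤ : ℕ∞) (fun q => (∑ η, φ η q ^ n) ^ (-(1 : ℝ) / (n : ℝ))) := by
    rw [contDiff_iff_contDiffAt]
    exact fun x => (hSsm.contDiffAt).rpow_const_of_ne (hS x).ne'
  have hlsm : ∀ ξ, ContDiff ℝ (⊤ : ℕ∞) (cutoff r n φ ξ) := fun ξ => (hφsm ξ).mul hRsm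
  -- ∑ l^n = 1
  have hln : ∀ ξ q, (cutoff r n φ ξ q) ^ n = φ ξ q ^ n * (∑ η, φ η q ^ n)⁻¹ := by
    intro ξ q
    rw [cutoff, mul_pow]
    congr 1
    rw [← Real.rpow_natCast ((∑ η, φ η q ^ n) ^ (-(1:ℝ)/(n:ℝ))) n,
      ← Real.rpow_mul (hS q).le, div_mul_cancel₀ _ hnR]
    simp [Real.rpow_neg_one]
  have hsum1 : ∀ q, ∑ ξ, (cutoff r n φ ξ q) ^ n = 1 := by
    intro q
    simp only [hln]
    rw [← Finset.sum_mul, mul_inv_cancel₀ (hS q).ne']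
  refine ⟨hlsm, hsum1, ?_, ?_⟩
  · -- smoothness of l * a
    intro ξ κ
    refine mul_contDiff_of_tsupport (hU ξ) (hlsm ξ) ?_ (hasm ξ κ)
    refine subset_trans (closure_mono ?_) (hφsupp ξ)
    intro q hq
    simp only [Function.mem_support, cutoff] at hq ⊢
    exact fun h0 => hq (by rw [h0, zero_mul])
  · -- the decomposition
    intro q p
    have key : ∀ ξ, ∑ κ : Fin n → Fin m,
        (cutoff r n φ ξ q * a ξ κ q * p (κ ⟨0, by omega⟩))
          * ∏ t ∈ Finset.univ.erase (⟨0, by omega⟩ : Fin n),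
              (cutoff r n φ ξ q * p (κ t))
        = (cutoff r n φ ξ q) ^ n * f (q, p) := by
      intro ξ
      by_cases hξ : cutoff r n φ ξ q = 0
      · rw [hξ]
        simp [Nat.one_le_iff_ne_zero.mp hn]
      · have hφξ : φ ξ q ≠ 0 := fun h => hξ (by rw [cutoff, h, zero_mul])
        have hqU : q ∈ U ξ := hφsupp ξ (subset_closure (Function.mem_support.mpr hφξ))
        rw [hf ξ q hqU p, Finset.mul_sum]
        refine Finset.sum_congr rfl fun κ _ => ?_
        set l := cutoff r n φ ξ q
        have hcard : (Finset.univ.erase (⟨0, by omega⟩ : Fin n)).card = n - 1 := by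
          rw [Finset.card_erase_of_mem (Finset.mem_univ _), Finset.card_univ,
            Fintype.card_fin]
        rw [Finset.prod_mul_distrib, Finset.prod_const, hcard]
        have hprod : p (κ ⟨0, by omega⟩) * ∏ t ∈ Finset.univ.erase (⟨0, by omega⟩ : Fin n),
            p (κ t) = ∏ t, p (κ t) :=
          Finset.mul_prod_erase Finset.univ (fun t => p (κ t)) (Finset.mem_univ _)
        have hpow : l * l ^ (n - 1) = l ^ n := by
          rw [← pow_succ']
          congr 1
          omega
        calc l * a ξ κ q * p (κ ⟨0, by omega⟩) * (l ^ (n - 1) *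
              ∏ t ∈ Finset.univ.erase (⟨0, by omega⟩ : Fin n), p (κ t))
            = (l * l ^ (n - 1)) * (a ξ κ q * (p (κ ⟨0, by omega⟩) *
              ∏ t ∈ Finset.univ.erase (⟨0, by omega⟩ : Fin n), p (κ t))) := by ring
          _ = l ^ n * (a ξ κ q * ∏ t, p (κ t)) := by rw [hpow, hprod]
    simp only [key, ← Finset.sum_mul, hsum1 q, one_mul]
end
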